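/- arXiv:1608.07310 — 6 statements merged into one kernel-verified Lean document; each statement's English description precedes it below -/
import Mathlib

section
/- If a set X* ⊆ X is variationally stable, then X* is convex. Specifically, if there is a neighborhood U of X* such that ⟨v(x), x − x*⟩ ≤ 0 for all x ∈ U and x* ∈ X*, with equality (for a given x*) iff x ∈ X*, then for any x₀, x₁ ∈ X* and λ ∈ [0,1], the point (1−λ)x₀ + λx₁ belongs to X*. -/
/-!
Along a segment `[x₀, x₁]` with endpoints in `X*`, the two variational inequalities at a point
`y = a • x₀ + b • x₁` sum, with weights `a` and `b`, to `0`, so one of them is an equality and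
`y ∈ X*` as soon as `y` lies in the neighborhood `U`. Hence `X*` and the interior of `U` cut the
segment in the same set, which is then relatively clopen; connectedness of the segment does the rest.
-/

open Set Topology

section Segment

variable {E : Type*} [NormedAddCommGroup E] [InnerProductSpace ℝ E]

theorem inner_sub_eq_zero_or_of_mem_segment {w x₀ x₁ y : E} (hy : y ∈ segment ℝ x₀ x₁)
    (h₀ : inner ℝ w (y - x₀) ≤ 0) (h₁ : inner ℝ w (y - x₁) ≤ 0) :
    inner ℝ w (y - x₀) = 0 ∨ inner ℝ w (y - x₁) = 0 := by
  obtain ⟨a, b, ha, hb, hab, rfl⟩ := hy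
  obtain rfl : b = 1 - a := eq_sub_of_add_eq' hab
  have hsum : a * inner ℝ w (a • x₀ + (1 - a) • x₁ - x₀)
      + (1 - a) * inner ℝ w (a • x₀ + (1 - a) • x₁ - x₁) = 0 := by
    have hzero :
        a • (a • x₀ + (1 - a) • x₁ - x₀) + (1 - a) • (a • x₀ + (1 - a) • x₁ - x₁) = 0 := by
      module
    rw [← real_inner_smul_right, ← real_inner_smul_right, ← inner_add_right, hzero,
      inner_zero_right]
  rcases ha.eq_or_lt with rfl | ha
  · right
    linarith
  · left
    nlinarith [mul_nonpos_of_nonneg_of_nonpos hb h₁]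

theorem segment_subset_of_isClosed {S U : Set E} (hS : IsClosed S) (hU : ∀ p ∈ S, U ∈ 𝓝 p)
    {x₀ x₁ : E} (hx₀ : x₀ ∈ S) (h : segment ℝ x₀ x₁ ∩ U ⊆ S) : segment ℝ x₀ x₁ ⊆ S := by
  have hSU : S ⊆ interior U := fun p hp => mem_interior_iff_mem_nhds.2 (hU p hp)
  have hcover : segment ℝ x₀ x₁ ⊆ interior U ∪ Sᶜ := fun y _ =>
    (em (y ∈ S)).imp (hSU ·) id
  have hdisj : segment ℝ x₀ x₁ ∩ (interior U ∩ Sᶜ) = ∅ :=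
    eq_empty_of_forall_notMem fun y ⟨hy, hyU, hyS⟩ => hyS (h ⟨hy, interior_subset hyU⟩)
  rcases isPreconnected_iff_subset_of_disjoint.1 (convex_segment x₀ x₁).isPreconnected _ _
    isOpen_interior hS.isOpen_compl hcover hdisj with hsub | hsub
  · exact fun y hy => h ⟨hy, interior_subset (hsub hy)⟩
  · exact absurd hx₀ (hsub (left_mem_segment ℝ x₀ x₁))

end Segment

theorem stmt1_general
    {E : Type*} [NormedAddCommGroup E] [InnerProductSpace ℝ E]
    (X : Set E) (hXconv : Convex ℝ X)
    (v : E → E)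
    (Xs : Set E) (hXsX : Xs ⊆ X) (hXscl : IsClosed Xs)
    (U : Set E) (hU : ∀ p ∈ Xs, U ∈ nhds p)
    (hVS : ∀ x ∈ X ∩ U, ∀ p ∈ Xs, (inner ℝ (v x) (x - p) : ℝ) ≤ 0)
    (hVSeq : ∀ x ∈ X ∩ U, ∀ p ∈ Xs, ((inner ℝ (v x) (x - p) : ℝ) = 0 ↔ x ∈ Xs)) :
    ∀ x₀ ∈ Xs, ∀ x₁ ∈ Xs, ∀ l ∈ Set.Icc (0 : ℝ) 1, (1 - l) • x₀ + l • x₁ ∈ Xs := by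
  intro x₀ hx₀ x₁ hx₁ l hl
  have hseg : segment ℝ x₀ x₁ ∩ U ⊆ Xs := by
    rintro y ⟨hy, hyU⟩
    have hyXU : y ∈ X ∩ U := ⟨hXconv.segment_subset (hXsX hx₀) (hXsX hx₁) hy, hyU⟩
    rcases inner_sub_eq_zero_or_of_mem_segment hy (hVS y hyXU x₀ hx₀) (hVS y hyXU x₁ hx₁)
      with h | h
    exacts [(hVSeq y hyXU x₀ hx₀).1 h, (hVSeq y hyXU x₁ hx₁).1 h]
  exact segment_subset_of_isClosed hXscl hU hx₀ hseg
    ⟨1 - l, l, by linarith [hl.2], hl.1, by ring, rfl⟩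

/-- A variationally stable set `X*` is convex. -/
theorem stmt1
    {E : Type*} [NormedAddCommGroup E] [InnerProductSpace ℝ E] [FiniteDimensional ℝ E]
    (X : Set E) (hXc : IsCompact X) (hXconv : Convex ℝ X)
    (v : E → E) (hv : ContinuousOn v X)
    (Xs : Set E) (hXsX : Xs ⊆ X) (hXsne : Xs.Nonempty) (hXscl : IsClosed Xs)
    (U : Set E) (hU : ∀ p ∈ Xs, U ∈ nhds p)
    (hVS : ∀ x ∈ X ∩ U, ∀ p ∈ Xs, (inner ℝ (v x) (x - p) : ℝ) ≤ 0)
    (hVSeq : ∀ x ∈ X ∩ U, ∀ p ∈ Xs, ((inner ℝ (v x) (x - p) : ℝ) = 0 ↔ x ∈ Xs)) :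
    ∀ x₀ ∈ Xs, ∀ x₁ ∈ Xs, ∀ l ∈ Set.Icc (0 : ℝ) 1, (1 - l) • x₀ + l • x₁ ∈ Xs :=
  stmt1_general X hXconv v Xs hXsX hXscl U hU hVS hVSeq
end

section
/- If X* ⊆ X is globally variationally stable (i.e., ⟨v(x), x − x*⟩ ≤ 0 for all x ∈ X and x* ∈ X*, with equality iff x ∈ X*), then every point of X* is a Nash equilibrium of the game, and conversely every Nash equilibrium of the game belongs to X*; i.e., X* coincides with the set of Nash equilibria. -/
/-- If `X* ⊆ X` is globally variationally stable, then `X*` coincides with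
the set of Nash equilibria of the game. -/
theorem stmt2
    {ι : Type*} [Fintype ι] [DecidableEq ι]
    {E : ι → Type*} [∀ i, NormedAddCommGroup (E i)] [∀ i, InnerProductSpace ℝ (E i)]
    [∀ i, FiniteDimensional ℝ (E i)]
    (X : ∀ i, Set (E i)) (hXc : ∀ i, IsCompact (X i)) (hXconv : ∀ i, Convex ℝ (X i))
    (u : ι → (∀ j, E j) → ℝ) (v : ∀ i : ι, (∀ j, E j) → E i)
    (hu : ∀ i, Continuous (u i)) (hv : ∀ i, Continuous (v i))
    -- `v i x` is the gradient of `u i` in player `i`'s own variable: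
    (hgrad : ∀ i (x : ∀ j, E j) (z : E i),
      HasDerivAt (fun t : ℝ => u i (Function.update x i (x i + t • z)))
        (@inner ℝ (E i) _ (v i x) z) 0)
    (Xs : Set (∀ j, E j)) (hXsne : Xs.Nonempty) (hXscl : IsClosed Xs)
    (hXsX : ∀ p ∈ Xs, ∀ i, p i ∈ X i)
    -- global variational stability of `Xs`:
    (hVS : ∀ x : ∀ j, E j, (∀ i, x i ∈ X i) → ∀ p ∈ Xs,
      ∑ i : ι, (@inner ℝ (E i) _ (v i x) (x i - p i)) ≤ 0)
    (hVSeq : ∀ x : ∀ j, E j, (∀ i, x i ∈ X i) → ∀ p ∈ Xs,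
      ((∑ i : ι, (@inner ℝ (E i) _ (v i x) (x i - p i))) = 0 ↔ x ∈ Xs)) :
    ∀ x : ∀ j, E j,
      x ∈ Xs ↔
        ((∀ i, x i ∈ X i) ∧
          ∀ i, ∀ xi ∈ X i, u i (Function.update x i xi) ≤ u i x) := by
  -- derivative of the payoff along a ray, at an arbitrary time `t`
  have hkey : ∀ (i : ι) (x : ∀ j, E j) (z : E i) (t : ℝ),
      HasDerivAt (fun s : ℝ => u i (Function.update x i (x i + s • z)))
        (@inner ℝ (E i) _ (v i (Function.update x i (x i + t • z))) z) t := by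
    intro i x z t
    set y := Function.update x i (x i + t • z) with hy
    have h := hgrad i y z
    have hrw : (fun s : ℝ => u i (Function.update y i (y i + s • z)))
        = fun s : ℝ => u i (Function.update x i (x i + (t + s) • z)) := by
      funext s
      simp [hy, Function.update_idem, add_smul, add_assoc]
    rw [hrw] at h
    have hshift : HasDerivAt (fun r : ℝ => r - t) 1 t := by
      simpa using (hasDerivAt_id t).sub_const t
    have h' : HasDerivAt (fun s : ℝ => u i (Function.update x i (x i + (t + s) • z)))
        (@inner ℝ (E i) _ (v i y) z) (t - t) := by simpa using h
    have h2 := HasDerivAt.comp (h := fun r : ℝ => r - t) t h' hshift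
    have hfun : ((fun s : ℝ => u i (Function.update x i (x i + (t + s) • z))) ∘ fun r : ℝ => r - t)
        = fun s : ℝ => u i (Function.update x i (x i + s • z)) := by
      funext r
      simp only [Function.comp_apply]
      have : t + (r - t) = r := by ring
      rw [this]
    rw [hfun, mul_one] at h2
    exact h2
  intro x
  constructor
  · -- x ∈ Xs → Nash
    intro hx
    have hxX : ∀ i, x i ∈ X i := hXsX x hx
    refine ⟨hxX, ?_⟩
    intro i xi hxi
    set z := xi - x i with hz
    set φ : ℝ → ℝ := fun t => u i (Function.update x i (x i + t • z)) with hφ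
    have hφd : ∀ t : ℝ, HasDerivAt φ
        (@inner ℝ (E i) _ (v i (Function.update x i (x i + t • z))) z) t :=
      fun t => hkey i x z t
    have hcont : ContinuousOn φ (Set.Icc (0:ℝ) 1) :=
      (Continuous.continuousOn (by fun_prop))
    have hmemX : ∀ t ∈ Set.Icc (0:ℝ) 1, ∀ j,
        Function.update x i (x i + t • z) j ∈ X j := by
      intro t ht j
      by_cases hj : j = i
      · subst hj
        have : x j + t • z = (1 - t) • x j + t • xi := by
          simp [hz, smul_sub, sub_smul]; abel
        rw [Function.update_self, this]
        exact hXconv j (hxX j) hxi (by linarith [ht.1, ht.2]) ht.1 (by ring)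
      · rw [Function.update_of_ne hj]; exact hxX j
    have hderiv_nonpos : ∀ t ∈ Set.Ioo (0:ℝ) 1,
        @inner ℝ (E i) _ (v i (Function.update x i (x i + t • z))) z ≤ 0 := by
      intro t ht
      set y := Function.update x i (x i + t • z) with hy
      have hsum := hVS y (hmemX t ⟨le_of_lt ht.1, le_of_lt ht.2⟩) x hx
      have hsum' : (∑ j : ι, (@inner ℝ (E j) _ (v j y) (y j - x j)))
          = t * @inner ℝ (E i) _ (v i y) z := by
        rw [Finset.sum_eq_single i]
        · simp [hy, real_inner_smul_right]
        · intro j _ hj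
          simp [hy, Function.update_of_ne hj]
        · intro h; exact absurd (Finset.mem_univ i) h
      rw [hsum'] at hsum
      nlinarith [ht.1]
    have hanti : AntitoneOn φ (Set.Icc (0:ℝ) 1) := by
      apply antitoneOn_of_deriv_nonpos (convex_Icc 0 1) hcont
      · intro t ht
        exact (hφd t).differentiableAt.differentiableWithinAt
      · intro t ht
        rw [interior_Icc] at ht
        rw [(hφd t).deriv]
        exact hderiv_nonpos t ht
    have h01 := hanti (Set.left_mem_Icc.mpr one_pos.le) (Set.right_mem_Icc.mpr one_pos.le)
      zero_le_one
    have hφ0 : φ 0 = u i x := by simp [hφ]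
    have hφ1 : φ 1 = u i (Function.update x i xi) := by simp [hφ, hz]
    rw [hφ0, hφ1] at h01
    exact h01
  · -- Nash → x ∈ Xs
    rintro ⟨hxX, hNash⟩
    obtain ⟨p, hp⟩ := hXsne
    have hle := hVS x hxX p hp
    have hge : ∀ i : ι, (0:ℝ) ≤ @inner ℝ (E i) _ (v i x) (x i - p i) := by
      intro i
      set z := p i - x i with hz
      set ψ : ℝ → ℝ := fun t => u i (Function.update x i (x i + t • z)) with hψ
      have hd : HasDerivAt ψ (@inner ℝ (E i) _ (v i x) z) 0 := hgrad i x z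
      have hψle : ∀ t ∈ Set.Ioc (0:ℝ) 1, ψ t ≤ ψ 0 := by
        intro t ht
        have hmem : x i + t • z ∈ X i := by
          have : x i + t • z = (1 - t) • x i + t • p i := by
            simp [hz, smul_sub, sub_smul]; abel
          rw [this]
          exact hXconv i (hxX i) (hXsX p hp i) (by linarith [ht.1, ht.2]) ht.1.le (by ring)
        have := hNash i (x i + t • z) hmem
        simpa [hψ] using this
      have hslope : Filter.Tendsto (slope ψ 0) (nhdsWithin 0 (Set.Ioi 0))
          (nhds (@inner ℝ (E i) _ (v i x) z)) := by
        refine (hasDerivAt_iff_tendsto_slope.mp hd).mono_left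
          (nhdsWithin_mono 0 ?_)
        intro t ht
        exact ne_of_gt ht
      have hnp : @inner ℝ (E i) _ (v i x) z ≤ 0 := by
        refine le_of_tendsto hslope ?_
        filter_upwards [Ioc_mem_nhdsGT_of_mem (Set.left_mem_Ico.mpr one_pos)] with t ht
        have : ψ t - ψ 0 ≤ 0 := sub_nonpos.mpr (hψle t ht)
        have ht0 : (0:ℝ) < t := ht.1
        have hs : slope ψ 0 t = (ψ t - ψ 0) / t := by
          rw [slope_def_field]; simp
        rw [hs]
        exact div_nonpos_of_nonpos_of_nonneg this ht0.le
      have : @inner ℝ (E i) _ (v i x) (x i - p i)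
          = - @inner ℝ (E i) _ (v i x) z := by
        rw [hz, ← inner_neg_right, neg_sub]
      rw [this]
      linarith
    have hsum_ge : (0:ℝ) ≤ ∑ i : ι, (@inner ℝ (E i) _ (v i x) (x i - p i)) :=
      Finset.sum_nonneg fun i _ => hge i
    exact (hVSeq x hxX p hp).mp (le_antisymm hle hsum_ge)
end

section
/- Let h be a K-strongly convex penalty on compact convex X, h* its convex conjugate, Q(y) = argmax_{x∈X}{⟨y,x⟩ − h(x)}, and define the Fenchel coupling F(p, y) = h(p) + h*(y) − ⟨y, p⟩ for p ∈ X, y ∈ V*. Then F(p, y) ≥ (K/2)‖Q(y) − p‖² for all p ∈ X and y ∈ V*. -/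
/-! The Fenchel coupling is `g p - g (Q y)` for `g = h - ⟨y, ·⟩`, which is `K`-strongly convex
and minimized on `X` at `Q y`. Comparing `g (Q y)` with `g` at the point `t • p + (1 - t) • Q y`
of the segment, dividing by `t` and letting `t → 0⁺` gives the quadratic lower bound. -/

open Filter Set Topology

section StrongConvexOn

variable {E : Type*} [NormedAddCommGroup E] [NormedSpace ℝ E] {s : Set E} {m : ℝ} {f g : E → ℝ}

lemma StrongConvexOn.sub_concaveOn (hf : StrongConvexOn s m f) (hg : ConcaveOn ℝ s g) :
    StrongConvexOn s m (f - g) := by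
  simpa [StrongConvexOn] using hf.sub hg.uniformConcaveOn_zero

lemma strongConvexOn_of_forall_mem_Icc (hs : Convex ℝ s)
    (hf : ∀ x ∈ s, ∀ x' ∈ s, ∀ t ∈ Icc (0 : ℝ) 1,
      f (t • x + (1 - t) • x') ≤ t * f x + (1 - t) * f x' - m / 2 * t * (1 - t) * ‖x' - x‖ ^ 2) :
    StrongConvexOn s m f := by
  refine ⟨hs, fun x hx x' hx' a b ha hb hab ↦ ?_⟩
  obtain rfl : b = 1 - a := by linarith
  have := hf x hx x' hx' a ⟨ha, by linarith⟩
  rw [norm_sub_rev] at this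
  simp only [smul_eq_mul]
  linarith

lemma StrongConvexOn.add_sq_norm_sub_le_of_isMinOn {x y : E} (hf : StrongConvexOn s m f)
    (hx : x ∈ s) (hmin : IsMinOn f s x) (hy : y ∈ s) :
    f x + m / 2 * ‖y - x‖ ^ 2 ≤ f y := by
  have hsegment : ∀ t ∈ Ioo (0 : ℝ) 1, (1 - t) * (m / 2 * ‖y - x‖ ^ 2) ≤ f y - f x := by
    rintro t ⟨ht0, ht1⟩
    have hconv := hf.2 hy hx ht0.le (sub_nonneg.2 ht1.le) (add_sub_cancel t 1)
    have hmin_t := hmin (hf.1 hy hx ht0.le (sub_nonneg.2 ht1.le) (add_sub_cancel t 1))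
    simp only [smul_eq_mul, mem_ofPred_eq] at hconv hmin_t
    -- dividing `t * ((1 - t) * c) ≤ t * (f y - f x)` by `t > 0`
    nlinarith
  have hlim : Tendsto (fun t : ℝ ↦ (1 - t) * (m / 2 * ‖y - x‖ ^ 2)) (𝓝[>] 0)
      (𝓝 (m / 2 * ‖y - x‖ ^ 2)) := by
    have : Continuous fun t : ℝ ↦ (1 - t) * (m / 2 * ‖y - x‖ ^ 2) := by fun_prop
    simpa using (this.tendsto 0).mono_left nhdsWithin_le_nhds
  have := le_of_tendsto hlim (eventually_of_mem (Ioo_mem_nhdsGT one_pos) hsegment)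
  linarith

end StrongConvexOn

theorem stmt8_general
    {E : Type*} [NormedAddCommGroup E] [InnerProductSpace ℝ E]
    (X : Set E) (hXconv : Convex ℝ X)
    (h : E → ℝ)
    (K : ℝ)
    (hsc : ∀ x ∈ X, ∀ x' ∈ X, ∀ t ∈ Set.Icc (0 : ℝ) 1,
      h (t • x + (1 - t) • x') ≤ t * h x + (1 - t) * h x' - K / 2 * t * (1 - t) * ‖x' - x‖ ^ 2)
    (Q : E → E)
    (hQ : ∀ y : E, Q y ∈ X ∧ ∀ x ∈ X, (inner ℝ y x : ℝ) - h x ≤ (inner ℝ y (Q y) : ℝ) - h (Q y)) :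
    ∀ p ∈ X, ∀ y : E,
      K / 2 * ‖Q y - p‖ ^ 2 ≤
        h p + ((inner ℝ y (Q y) : ℝ) - h (Q y)) - (inner ℝ y p : ℝ) := by
  intro p hp y
  obtain ⟨hQX, hQmax⟩ := hQ y
  have hstrong : StrongConvexOn X K (h - fun x ↦ inner ℝ y x) :=
    (strongConvexOn_of_forall_mem_Icc hXconv hsc).sub_concaveOn
      ((innerSL ℝ y).toLinearMap.concaveOn hXconv)
  have hmin : IsMinOn (h - fun x ↦ inner ℝ y x) X (Q y) := fun x hx ↦ by
    simp only [mem_ofPred_eq, Pi.sub_apply]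
    linarith [hQmax x hx]
  have := hstrong.add_sq_norm_sub_le_of_isMinOn hQX hmin hp
  simp only [Pi.sub_apply] at this
  rw [norm_sub_rev]
  linarith

/-- The Fenchel coupling `F(p,y) = h(p) + h*(y) − ⟨y,p⟩` of a `K`-strongly
convex penalty `h` on a compact convex set `X` satisfies
`F(p,y) ≥ (K/2) ‖Q(y) − p‖²`, where `Q(y)` is the maximizer defining
`h*(y) = ⟨y, Q(y)⟩ − h(Q(y))`. -/
theorem stmt8
    {E : Type*} [NormedAddCommGroup E] [InnerProductSpace ℝ E] [FiniteDimensional ℝ E]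
    (X : Set E) (hXc : IsCompact X) (hXconv : Convex ℝ X) (hXne : X.Nonempty)
    (h : E → ℝ) (hcont : ContinuousOn h X)
    (K : ℝ) (hK : 0 < K)
    (hsc : ∀ x ∈ X, ∀ x' ∈ X, ∀ t ∈ Set.Icc (0 : ℝ) 1,
      h (t • x + (1 - t) • x') ≤ t * h x + (1 - t) * h x' - K / 2 * t * (1 - t) * ‖x' - x‖ ^ 2)
    (Q : E → E)
    (hQ : ∀ y : E, Q y ∈ X ∧ ∀ x ∈ X, (inner ℝ y x : ℝ) - h x ≤ (inner ℝ y (Q y) : ℝ) - h (Q y)) :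
    ∀ p ∈ X, ∀ y : E,
      K / 2 * ‖Q y - p‖ ^ 2 ≤
        h p + ((inner ℝ y (Q y) : ℝ) - h (Q y)) - (inner ℝ y p : ℝ) :=
  stmt8_general X hXconv h K hsc Q hQ
end

section
/- With h a K-strongly convex penalty on compact convex X, F(p,y) = h(p) + h*(y) − ⟨y,p⟩, and Q(y) = ∇h*(y) the induced choice map, the Fenchel coupling satisfies F(p, y′) ≤ F(p, y) + ⟨y′ − y, Q(y) − p⟩ + (1/(2K))‖y′ − y‖*² for all p ∈ X and y, y′ ∈ V*. -/
/-!
Only the conjugate part `h*(y) = ⟪y, Q y⟫ - h (Q y)` of the coupling depends on `y`, so the claim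
is the `1/K`-smoothness of `h*`. Strong convexity gives quadratic growth of `h - ⟪y, ·⟫` away from
its minimizer `Q y`: `⟪y, x⟫ - h x + K/2 ‖x - Q y‖² ≤ h*(y)` on `X`. Splitting
`⟪y', x⟫ = ⟪y, x⟫ + ⟪y' - y, Q y⟫ + ⟪y' - y, x - Q y⟫` and absorbing the last term into the growth
term by Cauchy–Schwarz and Young bounds `⟪y', x⟫ - h x` by `h*(y) + ⟪y' - y, Q y⟫ + ‖y' - y‖²/(2K)`
for every `x ∈ X`, in particular for `x = Q y'`.
-/

open Filter Topology

section StrongConvexity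

variable {E : Type*} [NormedAddCommGroup E] [InnerProductSpace ℝ E] {s : Set E} {m : ℝ}
  {f : E → ℝ}

lemma strongConvexOn_of_forall_Icc (hs : Convex ℝ s)
    (hf : ∀ x ∈ s, ∀ x' ∈ s, ∀ t ∈ Set.Icc (0 : ℝ) 1,
      f (t • x + (1 - t) • x') ≤ t * f x + (1 - t) * f x' - m / 2 * t * (1 - t) * ‖x' - x‖ ^ 2) :
    StrongConvexOn s m f := by
  refine ⟨hs, fun x hx x' hx' a b ha hb hab ↦ ?_⟩
  obtain rfl : b = 1 - a := by linarith
  have := hf x hx x' hx' a ⟨ha, by linarith⟩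
  rw [norm_sub_rev] at this
  simp only [smul_eq_mul]
  linarith

lemma StrongConvexOn.sub_inner (hf : StrongConvexOn s m f) (y : E) :
    StrongConvexOn s m fun x ↦ f x - inner ℝ y x := by
  have hlin : UniformConcaveOn s 0 (innerₛₗ ℝ y) :=
    uniformConcaveOn_zero.2 ((innerₛₗ ℝ y).concaveOn hf.1)
  have := hf.sub hlin
  rwa [add_zero] at this

lemma StrongConvexOn.add_sq_le_of_isMinOn (hf : StrongConvexOn s m f) {q x : E}
    (hmin : IsMinOn f s q) (hq : q ∈ s) (hx : x ∈ s) :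
    f q + m / 2 * ‖x - q‖ ^ 2 ≤ f x := by
  -- compare `f q` with `f` at `t • x + (1 - t) • q`, divide by `t` and let `t → 0⁺`
  have hnear : ∀ᶠ t in 𝓝[>] (0 : ℝ), f q + (1 - t) * (m / 2 * ‖x - q‖ ^ 2) ≤ f x := by
    filter_upwards [Ioc_mem_nhdsGT one_pos] with t ⟨ht0, ht1⟩
    have hconv := hf.2 hx hq ht0.le (sub_nonneg.2 ht1) (add_sub_cancel t 1)
    have hle := hmin (hf.1 hx hq ht0.le (sub_nonneg.2 ht1) (add_sub_cancel t 1))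
    simp only [smul_eq_mul, Set.mem_ofPred_eq] at hconv hle
    have : t * (f q + (1 - t) * (m / 2 * ‖x - q‖ ^ 2)) ≤ t * f x := by nlinarith
    exact le_of_mul_le_mul_left this ht0
  have hlim : Tendsto (fun t : ℝ ↦ f q + (1 - t) * (m / 2 * ‖x - q‖ ^ 2)) (𝓝[>] 0)
      (𝓝 (f q + m / 2 * ‖x - q‖ ^ 2)) := by
    refine tendsto_nhdsWithin_of_tendsto_nhds ?_
    have : Continuous fun t : ℝ ↦ f q + (1 - t) * (m / 2 * ‖x - q‖ ^ 2) := by fun_prop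
    simpa using this.tendsto 0
  exact le_of_tendsto hlim hnear

lemma StrongConvexOn.inner_sub_le_of_isMaxOn (hf : StrongConvexOn s m f) (hm : 0 < m)
    {y y' q x : E} (hmax : IsMaxOn (fun z ↦ inner ℝ y z - f z) s q) (hq : q ∈ s) (hx : x ∈ s) :
    inner ℝ y' x - f x ≤
      inner ℝ y q - f q + inner ℝ (y' - y) q + 1 / (2 * m) * ‖y' - y‖ ^ 2 := by
  have hgrowth : inner ℝ y x - f x + m / 2 * ‖x - q‖ ^ 2 ≤ inner ℝ y q - f q := by
    have hmin : IsMinOn (fun z ↦ f z - inner ℝ y z) s q := fun z hz ↦ by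
      simp only [Set.mem_ofPred_eq]; linarith [isMaxOn_iff.1 hmax z hz]
    linarith [(hf.sub_inner y).add_sq_le_of_isMinOn hmin hq hx]
  have hsplit : inner ℝ y' x = inner ℝ y x + inner ℝ (y' - y) q + inner ℝ (y' - y) (x - q) := by
    simp only [inner_sub_left, inner_sub_right]; ring
  have hcs : inner ℝ (y' - y) (x - q) ≤ ‖y' - y‖ * ‖x - q‖ := real_inner_le_norm _ _
  have hyoung : ‖y' - y‖ * ‖x - q‖ ≤ 1 / (2 * m) * ‖y' - y‖ ^ 2 + m / 2 * ‖x - q‖ ^ 2 := by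
    have := sq_nonneg (‖y' - y‖ - m * ‖x - q‖)
    field_simp
    nlinarith
  linarith

end StrongConvexity

theorem stmt9_general
    {E : Type*} [NormedAddCommGroup E] [InnerProductSpace ℝ E]
    (X : Set E) (hXconv : Convex ℝ X)
    (h : E → ℝ)
    (K : ℝ) (hK : 0 < K)
    (hsc : ∀ x ∈ X, ∀ x' ∈ X, ∀ t ∈ Set.Icc (0 : ℝ) 1,
      h (t • x + (1 - t) • x') ≤ t * h x + (1 - t) * h x' - K / 2 * t * (1 - t) * ‖x' - x‖ ^ 2)
    (Q : E → E)
    (hQ : ∀ y : E, Q y ∈ X ∧ ∀ x ∈ X, (inner ℝ y x : ℝ) - h x ≤ (inner ℝ y (Q y) : ℝ) - h (Q y)) :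
    ∀ p ∈ X, ∀ y y' : E,
      h p + ((inner ℝ y' (Q y') : ℝ) - h (Q y')) - (inner ℝ y' p : ℝ) ≤
        (h p + ((inner ℝ y (Q y) : ℝ) - h (Q y)) - (inner ℝ y p : ℝ))
          + (inner ℝ (y' - y) (Q y - p) : ℝ) + (1 / (2 * K)) * ‖y' - y‖ ^ 2 := by
  intro p _ y y'
  have hsmooth := (strongConvexOn_of_forall_Icc hXconv hsc).inner_sub_le_of_isMaxOn hK
    (y' := y') (isMaxOn_iff.2 (hQ y).2) (hQ y).1 (hQ y').1
  have hlin : inner ℝ (y' - y) (Q y - p) =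
      inner ℝ (y' - y) (Q y) - inner ℝ y' p + inner ℝ y p := by
    simp only [inner_sub_left, inner_sub_right]; ring
  linarith

/-- The Fenchel coupling `F(p,y) = h(p) + h*(y) − ⟨y,p⟩` of a `K`-strongly
convex penalty `h` on compact convex `X`, with choice map `Q(y) = ∇h*(y)`, satisfies
`F(p,y′) ≤ F(p,y) + ⟨y′ − y, Q(y) − p⟩ + (1/(2K)) ‖y′ − y‖²`. -/
theorem stmt9
    {E : Type*} [NormedAddCommGroup E] [InnerProductSpace ℝ E] [FiniteDimensional ℝ E]
    (X : Set E) (hXc : IsCompact X) (hXconv : Convex ℝ X) (hXne : X.Nonempty)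
    (h : E → ℝ) (hcont : ContinuousOn h X)
    (K : ℝ) (hK : 0 < K)
    (hsc : ∀ x ∈ X, ∀ x' ∈ X, ∀ t ∈ Set.Icc (0 : ℝ) 1,
      h (t • x + (1 - t) • x') ≤ t * h x + (1 - t) * h x' - K / 2 * t * (1 - t) * ‖x' - x‖ ^ 2)
    (Q : E → E)
    (hQ : ∀ y : E, Q y ∈ X ∧ ∀ x ∈ X, (inner ℝ y x : ℝ) - h x ≤ (inner ℝ y (Q y) : ℝ) - h (Q y)) :
    ∀ p ∈ X, ∀ y y' : E,
      h p + ((inner ℝ y' (Q y') : ℝ) - h (Q y')) - (inner ℝ y' p : ℝ) ≤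
        (h p + ((inner ℝ y (Q y) : ℝ) - h (Q y)) - (inner ℝ y p : ℝ))
          + (inner ℝ (y' - y) (Q y - p) : ℝ) + (1 / (2 * K)) * ‖y' - y‖ ^ 2 :=
  stmt9_general X hXconv h K hK hsc Q hQ
end

section
/- In the mixed extension of a finite game, every strict Nash equilibrium x* is variationally stable: there exists a neighborhood U of x* in the product of simplices such that ⟨v(x), x − x*⟩ ≤ 0 for all x ∈ U, with equality iff x = x*. -/
open Finset

variable {ι : Type*} [Fintype ι] [DecidableEq ι]

/-- Expected payoff of player `i` in a finite game under a mixed profile `x`. -/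
noncomputable def mixedPayoff {A : ι → Type*} [∀ i, Fintype (A i)]
    (u : ∀ _ : ι, (∀ j, A j) → ℝ) (i : ι) (x : ∀ j, A j → ℝ) : ℝ :=
  ∑ a : ∀ j, A j, (∏ j, x j (a j)) * u i a

/-- Payoff vector (individual payoff gradient) of player `i`:
`v_i(x)_α = u_i(α; x_{−i})`. -/
noncomputable def payVec {A : ι → Type*} [∀ i, Fintype (A i)] [∀ i, DecidableEq (A i)]
    (u : ∀ _ : ι, (∀ j, A j) → ℝ) (i : ι) (x : ∀ j, A j → ℝ) (α : A i) : ℝ :=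
  mixedPayoff u i (Function.update x i (fun β => if β = α then (1 : ℝ) else 0))

/-- The pure profile `α*` viewed as a mixed strategy profile (Dirac masses). -/
def pureProfile {A : ι → Type*} [∀ i, DecidableEq (A i)]
    (αstar : ∀ i, A i) : ∀ j, A j → ℝ :=
  fun j β => if β = αstar j then (1 : ℝ) else 0

lemma continuous_payVec {A : ι → Type*} [∀ i, Fintype (A i)] [∀ i, DecidableEq (A i)]
    (u : ∀ _ : ι, (∀ j, A j) → ℝ) (i : ι) (α : A i) :
    Continuous fun x : ∀ j, A j → ℝ => payVec u i x α := by
  unfold payVec mixedPayoff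
  apply continuous_finset_sum
  intro a _
  apply Continuous.mul _ continuous_const
  apply continuous_finset_prod
  intro j _
  by_cases h : j = i
  · subst h
    simp only [Function.update_self]
    exact continuous_const
  · simp only [Function.update_of_ne h]
    exact (continuous_apply (a j)).comp (continuous_apply j)

lemma mixedPayoff_pure {A : ι → Type*} [∀ i, Fintype (A i)] [∀ i, DecidableEq (A i)]
    (u : ∀ _ : ι, (∀ j, A j) → ℝ) (i : ι) (b : ∀ j, A j) :
    mixedPayoff u i (pureProfile b) = u i b := by
  unfold mixedPayoff
  rw [Finset.sum_eq_single b]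
  · simp [pureProfile]
  · intro a _ hab
    obtain ⟨j, hj⟩ := Function.ne_iff.mp hab
    rw [Finset.prod_eq_zero (Finset.mem_univ j), zero_mul]
    simp [pureProfile, hj]
  · simp

lemma payVec_pure {A : ι → Type*} [∀ i, Fintype (A i)] [∀ i, DecidableEq (A i)]
    (u : ∀ _ : ι, (∀ j, A j) → ℝ) (i : ι) (αstar : ∀ j, A j) (α : A i) :
    payVec u i (pureProfile αstar) α = u i (Function.update αstar i α) := by
  unfold payVec
  have h : Function.update (pureProfile αstar) i (fun β => if β = α then (1 : ℝ) else 0)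
      = pureProfile (Function.update αstar i α) := by
    funext j β
    rcases eq_or_ne j i with rfl | hji
    · simp [pureProfile]
    · simp [pureProfile, Function.update_of_ne hji]
  rw [h, mixedPayoff_pure]

/-- In the mixed extension of a finite game, every strict Nash equilibrium
`x*` is variationally stable: there is a neighborhood `U` of `x*` in the product of
simplices with `⟨v(x), x − x*⟩ ≤ 0` for all `x ∈ U`, with equality iff `x = x*`. -/
theorem stmt14
    {A : ι → Type*} [∀ i, Fintype (A i)] [∀ i, DecidableEq (A i)]
    (u : ∀ _ : ι, (∀ j, A j) → ℝ) (αstar : ∀ i, A i)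
    (hstrict : ∀ i, ∀ α : A i, α ≠ αstar i →
      u i (Function.update αstar i α) < u i αstar) :
    ∃ U : Set (∀ j, A j → ℝ), IsOpen U ∧ pureProfile αstar ∈ U ∧
      ∀ x : ∀ j, A j → ℝ, x ∈ U → (∀ i, x i ∈ stdSimplex ℝ (A i)) →
        ((∑ i : ι, ∑ α : A i,
            payVec u i x α * (x i α - pureProfile αstar i α) ≤ 0) ∧
          ((∑ i : ι, ∑ α : A i,
              payVec u i x α * (x i α - pureProfile αstar i α)) = 0 ↔
            x = pureProfile αstar)) := by
  refine ⟨{x | ∀ i, ∀ α : A i, α ≠ αstar i → payVec u i x α < payVec u i x (αstar i)},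
    ?_, ?_, ?_⟩
  · have : {x : ∀ j, A j → ℝ | ∀ i, ∀ α : A i, α ≠ αstar i →
        payVec u i x α < payVec u i x (αstar i)}
        = ⋂ i, ⋂ α : A i, {x | α ≠ αstar i → payVec u i x α < payVec u i x (αstar i)} := by
      ext x; simp [Set.mem_iInter]
    rw [this]
    apply isOpen_iInter_of_finite
    intro i
    apply isOpen_iInter_of_finite
    intro α
    by_cases h : α = αstar i
    · simp [h]
    · have : {x : ∀ j, A j → ℝ | α ≠ αstar i →
          payVec u i x α < payVec u i x (αstar i)}
          = {x | payVec u i x α < payVec u i x (αstar i)} := by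
        ext x; simp [h]
      rw [this]
      exact isOpen_lt (continuous_payVec u i α) (continuous_payVec u i (αstar i))
  · intro i α hα
    rw [payVec_pure, payVec_pure]
    simpa using hstrict i α hα
  · intro x hxU hsimp
    have hsum : ∀ i, ∑ α : A i, x i α = 1 := fun i => (hsimp i).2
    have hnn : ∀ i, ∀ α : A i, 0 ≤ x i α := fun i => (hsimp i).1
    -- rewrite each player's sum
    have key : ∀ i, (∑ α : A i, payVec u i x α * (x i α - pureProfile αstar i α))
        = ∑ α : A i, (payVec u i x α - payVec u i x (αstar i)) * x i α := by
      intro i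
      have h1 : ∑ α : A i, payVec u i x α * pureProfile αstar i α
          = payVec u i x (αstar i) := by
        simp [pureProfile, mul_ite]
      have h2 : ∑ α : A i, payVec u i x (αstar i) * x i α
          = payVec u i x (αstar i) := by
        rw [← Finset.mul_sum, hsum i, mul_one]
      simp only [mul_sub, sub_mul, Finset.sum_sub_distrib, h1, h2]
    have hterm : ∀ i, ∀ α : A i,
        (payVec u i x α - payVec u i x (αstar i)) * x i α ≤ 0 := by
      intro i α
      by_cases h : α = αstar i
      · subst h; simp
      · exact mul_nonpos_iff.mpr (Or.inr ⟨sub_nonpos.mpr (hxU i α h).le, hnn i α⟩)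
    have heq : (∑ i : ι, ∑ α : A i, payVec u i x α * (x i α - pureProfile αstar i α))
        = ∑ i : ι, ∑ α : A i, (payVec u i x α - payVec u i x (αstar i)) * x i α :=
      Finset.sum_congr rfl fun i _ => key i
    have hinner_nonpos : ∀ i ∈ (Finset.univ : Finset ι),
        (∑ α : A i, (payVec u i x α - payVec u i x (αstar i)) * x i α) ≤ 0 :=
      fun i _ => Finset.sum_nonpos fun α _ => hterm i α
    constructor
    · rw [heq]
      exact Finset.sum_nonpos hinner_nonpos
    · constructor
      · intro h0
        rw [heq] at h0
        have houter := (Finset.sum_eq_zero_iff_of_nonpos hinner_nonpos).mp h0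
        funext i β
        have hzero := (Finset.sum_eq_zero_iff_of_nonpos
          (fun α _ => hterm i α)).mp (houter i (Finset.mem_univ i))
        have hx0 : ∀ α : A i, α ≠ αstar i → x i α = 0 := by
          intro α hα
          have := hzero α (Finset.mem_univ α)
          rcases mul_eq_zero.mp this with hc | hx
          · exact absurd (sub_eq_zero.mp hc) (ne_of_lt (hxU i α hα))
          · exact hx
        by_cases hβ : β = αstar i
        · subst hβ
          have hx1 : ∑ α : A i, x i α = x i (αstar i) := by
            rw [Finset.sum_eq_single (αstar i)]
            · intro α _ hα; exact hx0 α hα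
            · simp
          simp only [pureProfile, if_pos rfl]
          rw [← hx1]
          exact hsum i
        · simp [pureProfile, hβ, hx0 β hβ]
      · intro h
        subst h
        simp
end

section
/- If x* is a sharp equilibrium — i.e., ⟨v(x*), z⟩ ≤ 0 for all z in the tangent cone TC(x*) with equality iff z = 0 — then v(x*) lies in the topological interior of the polar cone PC(x*), and consequently there is a neighborhood U of x* such that ⟨v(x), x − x*⟩ < 0 for all x ∈ U \ {x*}; in particular, x* is variationally stable. -/
/-!
The tangent cone is a closed cone, so its unit vectors form a compact set on which the continuous
function `z ↦ ⟪v x*, z⟫` is negative by sharpness; hence it is bounded above by some `-c < 0`, and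
by homogeneity `⟪v x*, z⟫ ≤ -c ‖z‖` on the whole tangent cone. This margin survives replacing
`v x*` by any `y` with `‖y - v x*‖ < c`: that gives the ball of radius `c` inside the polar cone
and, by continuity of `v`, the strict inequality `⟪v x, x - x*⟫ < 0` near `x*`.
-/

/-- The tangent cone to `X` at `p`: the closure of the set of rays emanating from `p`
through points of `X`. -/
def tanCone {E : Type*} [NormedAddCommGroup E] [NormedSpace ℝ E]
    (X : Set E) (p : E) : Set E :=
  closure {z : E | ∃ t : ℝ, 0 ≤ t ∧ ∃ x ∈ X, z = t • (x - p)}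

/-- The polar cone to `X` at `p`. -/
def polCone {E : Type*} [NormedAddCommGroup E] [InnerProductSpace ℝ E]
    (X : Set E) (p : E) : Set E :=
  {y : E | ∀ z ∈ tanCone X p, (inner ℝ y z : ℝ) ≤ 0}

section TangentCone

variable {E : Type*} [NormedAddCommGroup E] [NormedSpace ℝ E]

lemma isClosed_tanCone (X : Set E) (p : E) : IsClosed (tanCone X p) :=
  isClosed_closure

lemma smul_mem_tanCone {X : Set E} {p z : E} {t : ℝ} (ht : 0 ≤ t) (hz : z ∈ tanCone X p) :
    t • z ∈ tanCone X p := by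
  refine Set.MapsTo.closure (f := (t • ·)) ?_ (continuous_const_smul t) hz
  rintro _ ⟨s, hs, x, hx, rfl⟩
  exact ⟨t * s, mul_nonneg ht hs, x, hx, (mul_smul t s _).symm⟩

lemma sub_mem_tanCone {X : Set E} {p x : E} (hx : x ∈ X) : x - p ∈ tanCone X p :=
  subset_closure ⟨1, zero_le_one, x, hx, (one_smul ℝ _).symm⟩

end TangentCone

section Margin

variable {E : Type*} [NormedAddCommGroup E] [InnerProductSpace ℝ E]

lemma exists_pos_forall_inner_le_neg_mul_norm [ProperSpace E] {C : Set E} {a : E}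
    (hC : IsClosed C) (hcone : ∀ t : ℝ, 0 ≤ t → ∀ z ∈ C, t • z ∈ C)
    (hneg : ∀ z ∈ C, z ≠ 0 → inner ℝ a z < 0) :
    ∃ c > 0, ∀ z ∈ C, inner ℝ a z ≤ -c * ‖z‖ := by
  set K := C ∩ Metric.sphere (0 : E) 1
  have hK : IsCompact K := (isCompact_sphere 0 1).inter_left hC
  obtain ⟨m, hm, hmK⟩ : ∃ m : ℝ, 0 < m ∧ ∀ u ∈ K, m ≤ -inner ℝ a u :=
    hK.exists_forall_le' (continuous_const.inner continuous_id).neg.continuousOn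
      fun u hu ↦ neg_pos.mpr <| hneg u hu.1 (ne_zero_of_mem_unit_sphere ⟨u, hu.2⟩)
  refine ⟨m, hm, fun z hz ↦ ?_⟩
  rcases eq_or_ne z 0 with rfl | hz0
  · simp
  have hnorm : 0 < ‖z‖ := norm_pos_iff.mpr hz0
  have hunit : ‖z‖⁻¹ • z ∈ K :=
    ⟨hcone _ (inv_nonneg.mpr hnorm.le) z hz, by simp [norm_smul, hnorm.ne']⟩
  have := hmK _ hunit
  rw [real_inner_smul_right] at this
  have := mul_le_mul_of_nonneg_left this hnorm.le
  rw [mul_neg, mul_inv_cancel_left₀ hnorm.ne'] at this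
  linarith

lemma inner_le_sub_mul_norm_of_inner_le_neg_mul_norm {a b z : E} {c : ℝ}
    (h : inner ℝ a z ≤ -c * ‖z‖) : inner ℝ b z ≤ (‖b - a‖ - c) * ‖z‖ := by
  have hdiff := real_inner_le_norm (b - a) z
  rw [inner_sub_left] at hdiff
  linarith

end Margin

theorem stmt19_general
    {E : Type*} [NormedAddCommGroup E] [InnerProductSpace ℝ E] [FiniteDimensional ℝ E]
    (X : Set E)
    (v : E → E) (hv : ContinuousOn v X)
    (xs : E) (hxs : xs ∈ X)
    (hsharp : ∀ z ∈ tanCone X xs, (inner ℝ (v xs) z : ℝ) ≤ 0)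
    (hsharp_eq : ∀ z ∈ tanCone X xs, (inner ℝ (v xs) z : ℝ) = 0 → z = 0) :
    v xs ∈ interior (polCone X xs) ∧
      ∃ U ∈ nhds xs, ∀ x ∈ U ∩ X, x ≠ xs → (inner ℝ (v x) (x - xs) : ℝ) < 0 := by
  obtain ⟨c, hc, hmargin⟩ := exists_pos_forall_inner_le_neg_mul_norm (isClosed_tanCone X xs)
    (fun _ ht _ ↦ smul_mem_tanCone ht)
    (fun z hz hz0 ↦ (hsharp z hz).lt_of_ne (mt (hsharp_eq z hz) hz0))
  have hperturb : ∀ y, ∀ z ∈ tanCone X xs, inner ℝ y z ≤ (‖y - v xs‖ - c) * ‖z‖ := fun _ z hz ↦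
    inner_le_sub_mul_norm_of_inner_le_neg_mul_norm (hmargin z hz)
  refine ⟨mem_interior.mpr ⟨_, fun y hy z hz ↦ ?_, Metric.isOpen_ball, Metric.mem_ball_self hc⟩, ?_⟩
  · have hy' : ‖y - v xs‖ < c := mem_ball_iff_norm.mp hy
    exact (hperturb y z hz).trans
      (mul_nonpos_of_nonpos_of_nonneg (by linarith) (norm_nonneg z))
  obtain ⟨U, hU, hUv⟩ := mem_nhdsWithin_iff_exists_mem_nhds_inter.mp
    ((hv xs hxs).preimage_mem_nhdsWithin (Metric.ball_mem_nhds (v xs) hc))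
  refine ⟨U, hU, fun x hx hne ↦ (hperturb (v x) _ (sub_mem_tanCone hx.2)).trans_lt ?_⟩
  have hvx : ‖v x - v xs‖ < c := mem_ball_iff_norm.mp (hUv hx)
  exact mul_neg_of_neg_of_pos (by linarith) (norm_pos_iff.mpr (sub_ne_zero.mpr hne))

/-- If `x*` is a sharp equilibrium (`⟨v(x*), z⟩ ≤ 0` for all `z ∈ TC(x*)`,
with equality iff `z = 0`), then `v(x*)` lies in the interior of the polar cone `PC(x*)`,
and there is a neighborhood `U` of `x*` with `⟨v(x), x − x*⟩ < 0` for all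
`x ∈ U ∩ X \ {x*}`; in particular `x*` is variationally stable. -/
theorem stmt19
    {E : Type*} [NormedAddCommGroup E] [InnerProductSpace ℝ E] [FiniteDimensional ℝ E]
    (X : Set E) (hXc : IsCompact X) (hXconv : Convex ℝ X) (hXne : X.Nonempty)
    (v : E → E) (hv : ContinuousOn v X)
    (xs : E) (hxs : xs ∈ X)
    (hsharp : ∀ z ∈ tanCone X xs, (inner ℝ (v xs) z : ℝ) ≤ 0)
    (hsharp_eq : ∀ z ∈ tanCone X xs, (inner ℝ (v xs) z : ℝ) = 0 → z = 0) :
    v xs ∈ interior (polCone X xs) ∧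
      ∃ U ∈ nhds xs, ∀ x ∈ U ∩ X, x ≠ xs → (inner ℝ (v x) (x - xs) : ℝ) < 0 :=
  stmt19_general X v hv xs hxs hsharp hsharp_eq
end
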